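/- For every real parameter θ, the bivariate polynomial Ā(τ,σ) = 1/6 − (1/2)ξ₁P₁(σ) + (1/2)ξ₁P₁(τ) + ξ₁ξ₂ P₀(τ)P₂(σ) + ξ₁ξ₂ P₂(τ)P₀(σ) + θ P₁(τ)P₁(σ), where ξ₁ = 1/(2√3) and ξ₂ = 1/(2√15), satisfies simultaneously: (i) the simplifying assumption 𝒞𝒩(2): ∫₀¹ Ā(τ,σ) dσ = τ²/2 for all τ ∈ [0,1]; (ii) the simplifying assumption 𝒟𝒩(2): ∫₀¹ Ā(τ,σ) dτ = σ²/2 − σ + 1/2 for all σ ∈ [0,1]; and (iii) the symplecticity relation Ā(τ,σ) − Ā(σ,τ) = τ − σ for all τ, σ ∈ [0,1]. -/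

import Mathlib

/-!
With `P₁(t) = √3(2t−1)`, `P₂(t) = √5(6t²−6t+1)`, `ξ₁√3 = 1/2` and `ξ₁ξ₂√5 = 1/12`, the coefficient
collapses to the explicit polynomial `Ā(τ,σ) = τ²/2 + σ²/2 − σ + 1/3 + 3θ(2τ−1)(2σ−1)`.
The `θ`-term integrates to zero in either variable and is symmetric, so all three identities
reduce to integrating quadratics over `[0,1]`.
-/

open Real MeasureTheory

/-- The normalized shifted Legendre polynomial on `[0,1]`, via the Rodrigues formula. -/
noncomputable def legP (n : ℕ) : ℝ → ℝ :=
  fun t => (Real.sqrt (2 * n + 1) / n.factorial) * iteratedDeriv n (fun s => (s ^ 2 - s) ^ n) t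

/-- `ξ_ι = 1/(2√(4ι²−1))`; in particular `ξ₁ = 1/(2√3)`, `ξ₂ = 1/(2√15)`. -/
noncomputable def xiL (n : ℕ) : ℝ := 1 / (2 * Real.sqrt (4 * (n : ℝ) ^ 2 - 1))

lemma legP_zero (t : ℝ) : legP 0 t = 1 := by
  simp [legP]

lemma legP_one (t : ℝ) : legP 1 t = √3 * (2 * t - 1) := by
  norm_num [legP]

lemma deriv_sq_sub_self_sq :
    deriv (fun s : ℝ => (s ^ 2 - s) ^ 2) = fun s => 4 * s ^ 3 - 6 * s ^ 2 + 2 * s := by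
  ext s
  simp
  ring

lemma deriv_four_mul_cube_sub_six_mul_sq_add_two_mul :
    deriv (fun s : ℝ => 4 * s ^ 3 - 6 * s ^ 2 + 2 * s) = fun s => 12 * s ^ 2 - 12 * s + 2 := by
  ext s
  rw [deriv_fun_add (by fun_prop) (by fun_prop), deriv_fun_sub (by fun_prop) (by fun_prop)]
  simp
  ring

lemma legP_two (t : ℝ) : legP 2 t = √5 * (6 * t ^ 2 - 6 * t + 1) := by
  rw [legP, iteratedDeriv_succ, iteratedDeriv_one, deriv_sq_sub_self_sq,
    deriv_four_mul_cube_sub_six_mul_sq_add_two_mul]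
  norm_num
  ring

lemma xiL_one_mul_sqrt_three : xiL 1 * √3 = 1 / 2 := by
  norm_num [xiL]
  field_simp

lemma xiL_one_mul_xiL_two_mul_sqrt_five : xiL 1 * xiL 2 * √5 = 1 / 12 := by
  have h : √15 = √3 * √5 := by rw [← Real.sqrt_mul (by norm_num)]; norm_num
  norm_num [xiL, h]
  field_simp
  norm_num

lemma integral_quadratic_of_eq {f : ℝ → ℝ} (a b c₂ c₁ c₀ : ℝ)
    (hf : ∀ x, f x = c₂ * x ^ 2 + c₁ * x + c₀) :
    ∫ x in a..b, f x = c₂ * (b ^ 3 - a ^ 3) / 3 + c₁ * (b ^ 2 - a ^ 2) / 2 + c₀ * (b - a) := by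
  simp_rw [hf]
  have integrable {g : ℝ → ℝ} (hg : Continuous g) : IntervalIntegrable g volume a b :=
    hg.intervalIntegrable a b
  rw [intervalIntegral.integral_add (integrable (by fun_prop)) (integrable (by fun_prop)),
    intervalIntegral.integral_add (integrable (by fun_prop)) (integrable (by fun_prop)),
    intervalIntegral.integral_const_mul, intervalIntegral.integral_const_mul,
    integral_pow, integral_id, intervalIntegral.integral_const, smul_eq_mul]
  ring

lemma legendre_coefficient_eq (θ τ σ : ℝ) :
    1 / 6 - (1 / 2) * xiL 1 * legP 1 σ + (1 / 2) * xiL 1 * legP 1 τ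
        + xiL 1 * xiL 2 * legP 0 τ * legP 2 σ
        + xiL 1 * xiL 2 * legP 2 τ * legP 0 σ
        + θ * legP 1 τ * legP 1 σ
      = τ ^ 2 / 2 + σ ^ 2 / 2 - σ + 1 / 3 + 3 * θ * (2 * τ - 1) * (2 * σ - 1) := by
  have h3 : √3 * √3 = 3 := Real.mul_self_sqrt (by norm_num)
  rw [legP_zero, legP_zero, legP_one, legP_one, legP_two, legP_two]
  linear_combination (1 / 2 * ((2 * τ - 1) - (2 * σ - 1))) * xiL_one_mul_sqrt_three
    + ((6 * σ ^ 2 - 6 * σ + 1) + (6 * τ ^ 2 - 6 * τ + 1)) * xiL_one_mul_xiL_two_mul_sqrt_five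
    + (θ * (2 * τ - 1) * (2 * σ - 1)) * h3

theorem stmt_15 (θ : ℝ) (Abar : ℝ → ℝ → ℝ)
    (hA : ∀ τ σ : ℝ, Abar τ σ =
      1 / 6 - (1 / 2) * xiL 1 * legP 1 σ + (1 / 2) * xiL 1 * legP 1 τ
        + xiL 1 * xiL 2 * legP 0 τ * legP 2 σ
        + xiL 1 * xiL 2 * legP 2 τ * legP 0 σ
        + θ * legP 1 τ * legP 1 σ) :
    -- (i) 𝒞𝒩(2)
    (∀ τ ∈ Set.Icc (0:ℝ) 1, (∫ σ in (0:ℝ)..1, Abar τ σ) = τ ^ 2 / 2) ∧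
    -- (ii) 𝒟𝒩(2)
    (∀ σ ∈ Set.Icc (0:ℝ) 1, (∫ τ in (0:ℝ)..1, Abar τ σ) = σ ^ 2 / 2 - σ + 1 / 2) ∧
    -- (iii) symplecticity relation
    (∀ τ ∈ Set.Icc (0:ℝ) 1, ∀ σ ∈ Set.Icc (0:ℝ) 1, Abar τ σ - Abar σ τ = τ - σ) := by
  simp only [legendre_coefficient_eq] at hA
  refine ⟨fun τ _ => ?_, fun σ _ => ?_, fun τ _ σ _ => ?_⟩
  · rw [integral_quadratic_of_eq 0 1 (1 / 2) (6 * θ * (2 * τ - 1) - 1)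
      (τ ^ 2 / 2 + 1 / 3 - 3 * θ * (2 * τ - 1)) fun σ => by rw [hA]; ring]
    ring
  · rw [integral_quadratic_of_eq 0 1 (1 / 2) (6 * θ * (2 * σ - 1))
      (σ ^ 2 / 2 - σ + 1 / 3 - 3 * θ * (2 * σ - 1)) fun τ => by rw [hA]; ring]
    ring
  · rw [hA, hA]
    ring
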